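/- arXiv:2411.06988 — 2 statements merged into one kernel-verified Lean document; each statement's English description precedes it below -/
import Mathlib

section
/- For 0 < r < R and constants C, D with C − D√(1 − r²/R²) ≠ 0, the functions ν(r) = 2·log|C − D√(1 − r²/R²)| and λ(r) = −log(1 − r²/R²) satisfy the Karmarkar condition 2ν''(r) + (ν'(r))² = ν'(r)·λ'(r)·e^{λ(r)}/(e^{λ(r)} − 1). -/
/-! Writing `ν = 2 log |y|` gives `2ν'' + ν'² = 4y''/y` and `ν' = 2y'/y`, so the Karmarkar
condition becomes the linear equation `2y'' = y' · λ'e^λ/(e^λ - 1)` for `y`. For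
`λ = -log u` with `u = 1 - r²/R²` the factor `λ'e^λ/(e^λ - 1) = -u'/(u(1 - u))` equals
`2/(r u)`, and `y = C - D s` with `s = √u` solves the equation because
`(r/s)' = 1/s³`, which is `s² + r²/R² = 1` in disguise. -/

open Real Set Filter Topology

def KarmarkarCondition (ν lam : ℝ → ℝ) (r : ℝ) : Prop :=
  2 * deriv (deriv ν) r + deriv ν r ^ 2
    = deriv ν r * deriv lam r * exp (lam r) / (exp (lam r) - 1)

lemma HasDerivAt.two_mul_log_abs {y : ℝ → ℝ} {y' x : ℝ} (hy : HasDerivAt y y' x)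
    (hx : y x ≠ 0) :
    HasDerivAt (fun x => 2 * Real.log |y x|) (2 * y' / y x) x := by
  simp only [log_abs]
  exact ((hy.log hx).const_mul 2).congr_deriv (mul_div_assoc _ _ _).symm

lemma two_mul_deriv_deriv_add_sq_of_two_mul_log_abs {y y' : ℝ → ℝ} {y'' r : ℝ}
    (hy : ∀ᶠ x in 𝓝 r, HasDerivAt y (y' x) x) (hy' : HasDerivAt y' y'' r) (hr : y r ≠ 0) :
    2 * deriv (deriv fun x => 2 * log |y x|) r + deriv (fun x => 2 * log |y x|) r ^ 2
      = 4 * y'' / y r := by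
  have hne : ∀ᶠ x in 𝓝 r, y x ≠ 0 :=
    hy.self_of_nhds.continuousAt.eventually_ne hr
  have hderiv : deriv (fun x => 2 * log |y x|) =ᶠ[𝓝 r] fun x => 2 * y' x / y x := by
    filter_upwards [hy, hne] with x hx hx0
    exact (HasDerivAt.two_mul_log_abs hx hx0).deriv
  have hderiv2 := (hy'.const_mul 2).fun_div hy.self_of_nhds hr
  rw [hderiv.deriv_eq, hderiv2.deriv, hderiv.eq_of_nhds]
  field_simp
  ring

theorem karmarkarCondition_two_mul_log_abs {y y' lam : ℝ → ℝ} {y'' k r : ℝ}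
    (hy : ∀ᶠ x in 𝓝 r, HasDerivAt y (y' x) x) (hy' : HasDerivAt y' y'' r) (hr : y r ≠ 0)
    (hk : deriv lam r * exp (lam r) / (exp (lam r) - 1) = k) (h : 2 * y'' = y' r * k) :
    KarmarkarCondition (fun x => 2 * log |y x|) lam r := by
  rw [KarmarkarCondition, two_mul_deriv_deriv_add_sq_of_two_mul_log_abs hy hy' hr,
    (HasDerivAt.two_mul_log_abs hy.self_of_nhds hr).deriv, mul_assoc,
    mul_div_assoc (2 * y' r / y r), hk]
  field_simp
  linear_combination 2 * h

lemma deriv_neg_log_mul_exp_div {u : ℝ → ℝ} {u' r : ℝ} (hu : HasDerivAt u u' r)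
    (h0 : 0 < u r) (h1 : u r ≠ 1) :
    deriv (fun x => -log (u x)) r * exp (-log (u r)) / (exp (-log (u r)) - 1)
      = -u' / (u r * (1 - u r)) := by
  have h1' : 1 - u r ≠ 0 := sub_ne_zero.mpr h1.symm
  rw [deriv.fun_neg, (hu.log h0.ne').deriv, exp_neg, exp_log h0]
  field_simp

section SqrtOneSubSqDiv

variable {R x : ℝ}

lemma one_sub_sq_div_sq_pos (hx : x ∈ Ioo (-R) R) : 0 < 1 - x ^ 2 / R ^ 2 :=
  sub_pos.2 <| (div_lt_one (by nlinarith [hx.1, hx.2])).2 (sq_lt_sq' hx.1 hx.2)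

lemma hasDerivAt_one_sub_sq_div : HasDerivAt (fun x => 1 - x ^ 2 / R ^ 2) (-(2 * x) / R ^ 2) x :=
  ((hasDerivAt_pow 2 x).div_const (R ^ 2)).const_sub 1 |>.congr_deriv (by ring)

lemma hasDerivAt_sqrt_one_sub_sq_div (hx : 0 < 1 - x ^ 2 / R ^ 2) :
    HasDerivAt (fun x => √(1 - x ^ 2 / R ^ 2)) (-x / (R ^ 2 * √(1 - x ^ 2 / R ^ 2))) x := by
  refine (hasDerivAt_one_sub_sq_div.sqrt hx.ne').congr_deriv ?_
  field_simp

lemma hasDerivAt_div_sqrt_one_sub_sq_div (hx : 0 < 1 - x ^ 2 / R ^ 2) :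
    HasDerivAt (fun x => x / √(1 - x ^ 2 / R ^ 2)) (√(1 - x ^ 2 / R ^ 2) ^ 3)⁻¹ x := by
  have hs : 0 < √(1 - x ^ 2 / R ^ 2) := sqrt_pos.mpr hx
  have hs2 : √(1 - x ^ 2 / R ^ 2) ^ 2 = 1 - x ^ 2 / R ^ 2 := sq_sqrt hx.le
  refine ((hasDerivAt_id' x).fun_div (hasDerivAt_sqrt_one_sub_sq_div hx) hs.ne').congr_deriv ?_
  field_simp
  linarith

end SqrtOneSubSqDiv

theorem schwarzschild_interior_karmarkar_general
    (R C D : ℝ) :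
    ∀ r : ℝ, 0 < r → r < R →
      C - D * Real.sqrt (1 - r ^ 2 / R ^ 2) ≠ 0 →
      (fun (f g : ℝ → ℝ) =>
        2 * deriv (deriv f) r + (deriv f r) ^ 2
          = deriv f r * deriv g r * Real.exp (g r) / (Real.exp (g r) - 1))
      (fun r => 2 * Real.log |C - D * Real.sqrt (1 - r ^ 2 / R ^ 2)|)
      (fun r => -Real.log (1 - r ^ 2 / R ^ 2)) := by
  intro r hr0 hrR hC
  have hr : r ∈ Ioo (-R) R := ⟨by linarith, hrR⟩
  have hy : ∀ᶠ x in 𝓝 r, HasDerivAt (fun x => C - D * √(1 - x ^ 2 / R ^ 2))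
      (D / R ^ 2 * (x / √(1 - x ^ 2 / R ^ 2))) x := by
    filter_upwards [isOpen_Ioo.mem_nhds hr] with x hx
    refine (((hasDerivAt_sqrt_one_sub_sq_div (one_sub_sq_div_sq_pos hx)).const_mul D).const_sub
      C).congr_deriv ?_
    ring
  have hu := one_sub_sq_div_sq_pos hr
  have hR : R ≠ 0 := (hr0.trans hrR).ne'
  have hk := deriv_neg_log_mul_exp_div hasDerivAt_one_sub_sq_div hu (by simp [hr0.ne', hR])
  refine karmarkarCondition_two_mul_log_abs hy
    ((hasDerivAt_div_sqrt_one_sub_sq_div hu).const_mul (D / R ^ 2)) hC hk ?_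
  have hs := sqrt_pos.mpr hu
  have hs2 := sq_sqrt hu.le
  generalize √(1 - r ^ 2 / R ^ 2) = s at hs hs2 ⊢
  rw [sub_sub_cancel, ← hs2]
  field_simp

theorem schwarzschild_interior_karmarkar
    (R C D : ℝ) (hR : 0 < R) :
    ∀ r : ℝ, 0 < r → r < R →
      C - D * Real.sqrt (1 - r ^ 2 / R ^ 2) ≠ 0 →
      (fun (f g : ℝ → ℝ) =>
        2 * deriv (deriv f) r + (deriv f r) ^ 2
          = deriv f r * deriv g r * Real.exp (g r) / (Real.exp (g r) - 1))
      (fun r => 2 * Real.log |C - D * Real.sqrt (1 - r ^ 2 / R ^ 2)|)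
      (fun r => -Real.log (1 - r ^ 2 / R ^ 2)) :=
  schwarzschild_interior_karmarkar_general R C D
end

section
/- For 0 < r < R and constants C, D with C − D√(1 − r²/R²) ≠ 0, the functions ν(r) = 2·log|C − D√(1 − r²/R²)| and λ(r) = −log(1 − r²/R²) satisfy the conformal flatness condition (1 − e^{λ})/r² − ν'λ'/4 − (ν' − λ')/(2r) + ν''/2 + ν'²/4 = 0. -/
/-!
Write `s = √(1 - r²/R²)` and `u = C - D s`, so that `e^{ν/2} = |u|` and `e^λ = s⁻²`.
For `ν = 2 log |u|` one has `ν''/2 + ν'²/4 = u''/u`, and `u'' = D / (R² s³)`.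
Substituting, the terms free of `D` cancel (`(1 - e^λ)/r² = -λ'/(2r)`), and the remaining
terms are `D / (R² s³ u)` times `1 - s² - r²/R² = 0`.
-/

open Real Filter Topology

section LogAbs

variable {u u' : ℝ → ℝ} {x : ℝ}

lemma hasDerivAt_two_mul_log_abs {d : ℝ} (hu : HasDerivAt u d x) (hx : u x ≠ 0) :
    HasDerivAt (fun y => 2 * log |u y|) (2 * d / u x) x := by
  simp only [log_abs]
  exact ((hu.log hx).const_mul 2).congr_deriv (by ring)

lemma deriv_deriv_two_mul_log_abs {d : ℝ} (hu : ∀ᶠ y in 𝓝 x, HasDerivAt u (u' y) y)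
    (hu' : HasDerivAt u' d x) (hx : u x ≠ 0) :
    deriv (deriv fun y => 2 * log |u y|) x = 2 * (d * u x - u' x ^ 2) / u x ^ 2 := by
  have hne : ∀ᶠ y in 𝓝 x, u y ≠ 0 :=
    hu.self_of_nhds.continuousAt.eventually_ne hx
  have hderiv : deriv (fun y => 2 * log |u y|) =ᶠ[𝓝 x] fun y => 2 * u' y / u y := by
    filter_upwards [hu, hne] with y hy hy0
    exact (hasDerivAt_two_mul_log_abs hy hy0).deriv
  rw [hderiv.deriv_eq]
  exact (((hu'.const_mul 2).div hu.self_of_nhds hx).congr_deriv (by ring)).deriv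

end LogAbs

lemma hasDerivAt_one_sub_sq_div_sq (R x : ℝ) :
    HasDerivAt (fun y => 1 - y ^ 2 / R ^ 2) (-(2 * x / R ^ 2)) x :=
  (((hasDerivAt_pow 2 x).div_const (R ^ 2)).const_sub 1).congr_deriv (by push_cast; ring)

section Sqrt

variable {R x : ℝ}

lemma hasDerivAt_sqrt_one_sub_sq_div_sq (hv : 0 < 1 - x ^ 2 / R ^ 2) :
    HasDerivAt (fun y => √(1 - y ^ 2 / R ^ 2)) (-(x / (R ^ 2 * √(1 - x ^ 2 / R ^ 2)))) x := by
  have hs : √(1 - x ^ 2 / R ^ 2) ≠ 0 := (sqrt_pos.mpr hv).ne'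
  exact ((hasDerivAt_one_sub_sq_div_sq R x).sqrt hv.ne').congr_deriv (by field_simp)

lemma eventually_hasDerivAt_sqrt_one_sub_sq_div_sq (hv : 0 < 1 - x ^ 2 / R ^ 2) :
    ∀ᶠ y in 𝓝 x, HasDerivAt (fun y => √(1 - y ^ 2 / R ^ 2))
      (-(y / (R ^ 2 * √(1 - y ^ 2 / R ^ 2)))) y := by
  have hopen : IsOpen {y : ℝ | 0 < 1 - y ^ 2 / R ^ 2} :=
    isOpen_lt continuous_const (by fun_prop)
  filter_upwards [hopen.mem_nhds hv] with y hy
  exact hasDerivAt_sqrt_one_sub_sq_div_sq hy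

lemma hasDerivAt_div_sq_mul_sqrt_one_sub_sq_div_sq (hR : R ≠ 0) (hv : 0 < 1 - x ^ 2 / R ^ 2) :
    HasDerivAt (fun y => y / (R ^ 2 * √(1 - y ^ 2 / R ^ 2)))
      (1 / (R ^ 2 * √(1 - x ^ 2 / R ^ 2) ^ 3)) x := by
  have hs : √(1 - x ^ 2 / R ^ 2) ≠ 0 := (sqrt_pos.mpr hv).ne'
  have hs2 : √(1 - x ^ 2 / R ^ 2) ^ 2 = 1 - x ^ 2 / R ^ 2 := sq_sqrt hv.le
  refine ((hasDerivAt_id' x).div ((hasDerivAt_sqrt_one_sub_sq_div_sq hv).const_mul (R ^ 2))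
    (mul_ne_zero (pow_ne_zero 2 hR) hs)).congr_deriv ?_
  generalize √(1 - x ^ 2 / R ^ 2) = s at hs hs2 ⊢
  have hRs : R ^ 2 * s ^ 2 = R ^ 2 - x ^ 2 := by rw [hs2]; field_simp
  field_simp
  linear_combination hRs

end Sqrt

theorem schwarzschild_interior_conformally_flat_general
    (R C D : ℝ) :
    ∀ r : ℝ, 0 < r → r < R →
      C - D * Real.sqrt (1 - r ^ 2 / R ^ 2) ≠ 0 →
      (fun (f g : ℝ → ℝ) =>
        (1 - Real.exp (g r)) / r ^ 2 - deriv f r * deriv g r / 4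
          - (deriv f r - deriv g r) / (2 * r)
          + deriv (deriv f) r / 2 + (deriv f r) ^ 2 / 4 = 0)
      (fun r => 2 * Real.log |C - D * Real.sqrt (1 - r ^ 2 / R ^ 2)|)
      (fun r => -Real.log (1 - r ^ 2 / R ^ 2)) := by
  intro r hr hrR hu
  have hR : R ≠ 0 := (hr.trans hrR).ne'
  have hv : 0 < 1 - r ^ 2 / R ^ 2 := by
    rw [sub_pos, div_lt_one (by positivity)]
    nlinarith
  have hu' : ∀ᶠ y in 𝓝 r, HasDerivAt (fun y => C - D * √(1 - y ^ 2 / R ^ 2))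
      (D * (y / (R ^ 2 * √(1 - y ^ 2 / R ^ 2)))) y :=
    (eventually_hasDerivAt_sqrt_one_sub_sq_div_sq hv).mono fun y hy =>
      ((hy.const_mul D).const_sub C).congr_deriv (by ring)
  have hf' := (hasDerivAt_two_mul_log_abs hu'.self_of_nhds hu).deriv
  have hf'' := deriv_deriv_two_mul_log_abs hu'
    ((hasDerivAt_div_sq_mul_sqrt_one_sub_sq_div_sq hR hv).const_mul D) hu
  have hg' : HasDerivAt (fun y => -log (1 - y ^ 2 / R ^ 2))
      (2 * r / R ^ 2 / (1 - r ^ 2 / R ^ 2)) r :=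
    ((hasDerivAt_one_sub_sq_div_sq R r).log hv.ne').neg.congr_deriv (by ring)
  have hexp_g : exp (-log (1 - r ^ 2 / R ^ 2)) = (1 - r ^ 2 / R ^ 2)⁻¹ := by
    rw [exp_neg, exp_log hv]
  beta_reduce
  rw [hf', hf'', hg'.deriv, hexp_g]
  have hs : √(1 - r ^ 2 / R ^ 2) ≠ 0 := (sqrt_pos.mpr hv).ne'
  have hs2 : √(1 - r ^ 2 / R ^ 2) ^ 2 = 1 - r ^ 2 / R ^ 2 := sq_sqrt hv.le
  generalize √(1 - r ^ 2 / R ^ 2) = s at hs hs2 hu ⊢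
  have hr2 : r ^ 2 = R ^ 2 * (1 - s ^ 2) := by rw [hs2]; field_simp; ring
  rw [mul_comm] at hu
  rw [← hs2]
  field_simp
  linear_combination (4 * s * R ^ 2 * (C - s * D) ^ 2 - 4 * D * r ^ 2 * (C - s * D)) * hr2

theorem schwarzschild_interior_conformally_flat
    (R C D : ℝ) (hR : 0 < R) :
    ∀ r : ℝ, 0 < r → r < R →
      C - D * Real.sqrt (1 - r ^ 2 / R ^ 2) ≠ 0 →
      (fun (f g : ℝ → ℝ) =>
        (1 - Real.exp (g r)) / r ^ 2 - deriv f r * deriv g r / 4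
          - (deriv f r - deriv g r) / (2 * r)
          + deriv (deriv f) r / 2 + (deriv f r) ^ 2 / 4 = 0)
      (fun r => 2 * Real.log |C - D * Real.sqrt (1 - r ^ 2 / R ^ 2)|)
      (fun r => -Real.log (1 - r ^ 2 / R ^ 2)) :=
  schwarzschild_interior_conformally_flat_general R C D
end
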